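/- Let g ≥ 2 and n ≥ 2 be integers. For any integer d, one has β_g(n,d,n+1) ≥ 0 if and only if d ≥ g + n − ⌊g/(n+1)⌋, where ⌊·⌋ denotes the floor (integer part). (This is the numerical criterion of Corollary 6.3: G_L(n,d,n+1) ≠ ∅ on a Petri curve if and only if this inequality holds.) -/
import Mathlib

/-- The Brill–Noether number β_g(n,d,k) := n²(g−1) + 1 − k(k − d + n(g−1)). -/
def beta (g n d k : ℤ) : ℤ := n ^ 2 * (g - 1) + 1 - k * (k - d + n * (g - 1))

/-- For g ≥ 2, n ≥ 2 and any integer d: β_g(n,d,n+1) ≥ 0 ↔ d ≥ g + n − ⌊g/(n+1)⌋. -/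
theorem stmt_5 (g n : ℤ) (hg : 2 ≤ g) (hn : 2 ≤ n) :
    ∀ d : ℤ, 0 ≤ beta g n d (n + 1) ↔ g + n - g / (n + 1) ≤ d := by
  intro d
  have h1 : (0:ℤ) < n + 1 := by linarith
  have key : (0 ≤ beta g n d (n + 1)) ↔ (g + n - d) * (n + 1) ≤ g := by
    unfold beta; constructor <;> intro h <;> nlinarith
  rw [key, ← Int.le_ediv_iff_mul_le h1]
  omega
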